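/- For every complex number p with −1 < Re p < 0, ∫_{−∞}^{∞} exp(−p·t)/(e^t + 1) dt = −π/sin(π·p), the integral being absolutely convergent. (Paper's Example 3.15.3, computed via the Euler integral of the first kind.) -/

import Mathlib

/-!
Substituting `x = σ(t) = eᵗ/(eᵗ + 1)` (the logistic sigmoid, with `σ' = σ(1 - σ)`) maps `ℝ`
onto `(0, 1)` and turns `exp(-p t)/(eᵗ + 1) dt` into `x^(-p-1) (1 - x)^p dx`, so the integral
is the Beta integral `B(-p, 1 + p) = Γ(-p) Γ(1 + p)`, which Euler's reflection formula evaluates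
as `π / sin(-π p)`.
-/

open MeasureTheory Real Complex Set

namespace Complex

lemma cpow_sub_one_mul_self {x : ℂ} (hx : x ≠ 0) (u : ℂ) : x ^ (u - 1) * x = x ^ u := by
  rw [cpow_sub _ _ hx, cpow_one, div_mul_cancel₀ _ hx]

lemma ofReal_exp_cpow (t : ℝ) (u : ℂ) : (Real.exp t : ℂ) ^ u = exp (t * u) := by
  rw [cpow_def_of_ne_zero (ofReal_ne_zero.mpr (Real.exp_pos t).ne'),
    ← ofReal_log (Real.exp_pos t).le, Real.log_exp]

lemma betaIntegral_one_sub_eq_pi_div_sin {s : ℂ} (hs₀ : 0 < s.re) (hs₁ : s.re < 1) :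
    betaIntegral s (1 - s) = π / sin (π * s) := by
  have hGamma := Gamma_mul_Gamma_eq_betaIntegral hs₀ (by simpa using hs₁ : 0 < (1 - s).re)
  rw [add_sub_cancel, Gamma_one, one_mul] at hGamma
  rw [← hGamma, Gamma_mul_Gamma_one_sub]

lemma integrableOn_Ioo_betaKernel {u v : ℂ} (hu : 0 < u.re) (hv : 0 < v.re) :
    IntegrableOn (fun x : ℝ ↦ (x : ℂ) ^ (u - 1) * (1 - (x : ℂ)) ^ (v - 1)) (Ioo 0 1) :=
  ((intervalIntegrable_iff_integrableOn_Ioc_of_le zero_le_one).mp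
    (betaIntegral_convergent hu hv)).mono_set Ioo_subset_Ioc_self

lemma betaIntegral_eq_setIntegral_Ioo (u v : ℂ) :
    betaIntegral u v = ∫ x in Ioo (0 : ℝ) 1, (x : ℂ) ^ (u - 1) * (1 - (x : ℂ)) ^ (v - 1) := by
  rw [betaIntegral, intervalIntegral.integral_of_le zero_le_one, integral_Ioc_eq_integral_Ioo]

end Complex

namespace Real

lemma one_sub_sigmoid_eq_inv (t : ℝ) : 1 - sigmoid t = (exp t + 1)⁻¹ := by
  rw [← sigmoid_neg, sigmoid_def, neg_neg, add_comm]

lemma sigmoid_eq_exp_mul_one_sub_sigmoid (t : ℝ) : sigmoid t = exp t * (1 - sigmoid t) := by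
  have h := sigmoid_mul_rexp_neg (-t)
  rw [neg_neg] at h
  rw [← sigmoid_neg, ← h, mul_comm]

lemma abs_deriv_sigmoid_smul_betaKernel (u v : ℂ) (t : ℝ) :
    |sigmoid t * (1 - sigmoid t)| •
        ((sigmoid t : ℂ) ^ (u - 1) * (1 - (sigmoid t : ℂ)) ^ (v - 1)) =
      (sigmoid t : ℂ) ^ u * (1 - (sigmoid t : ℂ)) ^ v := by
  have hs : (sigmoid t : ℂ) ≠ 0 := ofReal_ne_zero.mpr (sigmoid_pos t).ne'
  have hs' : 1 - (sigmoid t : ℂ) ≠ 0 := by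
    exact_mod_cast (sub_pos.mpr (sigmoid_lt_one t)).ne'
  rw [abs_of_pos (mul_pos (sigmoid_pos t) (sub_pos.mpr (sigmoid_lt_one t))), Complex.real_smul,
    ← Complex.cpow_sub_one_mul_self hs u, ← Complex.cpow_sub_one_mul_self hs' v]
  push_cast
  ring

theorem integrable_sigmoid_cpow_mul_one_sub_sigmoid_cpow {u v : ℂ} (hu : 0 < u.re)
    (hv : 0 < v.re) :
    Integrable (fun t : ℝ ↦ (sigmoid t : ℂ) ^ u * (1 - (sigmoid t : ℂ)) ^ v) := by
  have h := (integrableOn_image_iff_integrableOn_abs_deriv_smul MeasurableSet.univ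
    (fun t _ ↦ (hasDerivAt_sigmoid t).hasDerivWithinAt) sigmoid_injective.injOn _).mp
    (by rw [image_univ, range_sigmoid]; exact Complex.integrableOn_Ioo_betaKernel hu hv)
  simpa only [abs_deriv_sigmoid_smul_betaKernel, integrableOn_univ] using h

theorem integral_sigmoid_cpow_mul_one_sub_sigmoid_cpow (u v : ℂ) :
    ∫ t : ℝ, (sigmoid t : ℂ) ^ u * (1 - (sigmoid t : ℂ)) ^ v = Complex.betaIntegral u v := by
  rw [Complex.betaIntegral_eq_setIntegral_Ioo, ← range_sigmoid, ← image_univ,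
    integral_image_eq_integral_abs_deriv_smul MeasurableSet.univ
      (fun t _ ↦ (hasDerivAt_sigmoid t).hasDerivWithinAt) sigmoid_injective.injOn]
  simp only [abs_deriv_sigmoid_smul_betaKernel, setIntegral_univ]

lemma cexp_neg_mul_div_exp_add_one (p : ℂ) (t : ℝ) :
    Complex.exp (-(p * t)) / (exp t + 1) =
      (sigmoid t : ℂ) ^ (-p) * (1 - (sigmoid t : ℂ)) ^ (1 + p) := by
  have hr : (0 : ℝ) < 1 - sigmoid t := sub_pos.mpr (sigmoid_lt_one t)
  have hr' : ((1 - sigmoid t : ℝ) : ℂ) ≠ 0 := Complex.ofReal_ne_zero.mpr hr.ne'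
  calc Complex.exp (-(p * t)) / (exp t + 1)
      = (exp t : ℂ) ^ (-p) * ((1 - sigmoid t : ℝ) : ℂ) ^ (-p + (1 + p)) := by
        rw [Complex.ofReal_exp_cpow, show -p + (1 + p) = 1 by ring, Complex.cpow_one,
          one_sub_sigmoid_eq_inv]
        push_cast
        ring
    _ = (sigmoid t : ℂ) ^ (-p) * (1 - (sigmoid t : ℂ)) ^ (1 + p) := by
        rw [Complex.cpow_add _ _ hr', ← mul_assoc, ← Complex.mul_cpow_ofReal_nonneg
          (exp_pos t).le hr.le, ← Complex.ofReal_mul, ← sigmoid_eq_exp_mul_one_sub_sigmoid]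
        push_cast
        ring

end Real

theorem two_sided_laplace_fermi (p : ℂ) (h₀ : -1 < p.re) (h₁ : p.re < 0) :
    Integrable (fun t : ℝ => Complex.exp (-(p * t)) / (Real.exp t + 1)) ∧
    (∫ t : ℝ, Complex.exp (-(p * t)) / (Real.exp t + 1)) =
      -(Real.pi : ℂ) / Complex.sin (Real.pi * p) := by
  have hu : 0 < (-p).re := by rw [neg_re]; linarith
  have hv : 0 < (1 + p).re := by rw [add_re, one_re]; linarith
  simp only [Real.cexp_neg_mul_div_exp_add_one]
  refine ⟨Real.integrable_sigmoid_cpow_mul_one_sub_sigmoid_cpow hu hv, ?_⟩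
  rw [Real.integral_sigmoid_cpow_mul_one_sub_sigmoid_cpow, show 1 + p = 1 - -p by ring,
    Complex.betaIntegral_one_sub_eq_pi_div_sin hu (by rw [neg_re]; linarith), mul_neg, Complex.sin_neg,
    div_neg, neg_div]
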